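/- Every stationary point β = (β_1,...,β_k) of the population negative log-likelihood L of a fitted Gaussian mixture satisfies β_i ∈ span{θ*_1,...,θ*_{k*}} for every i ∈ [k], where θ*_s are the true component centers. -/

import Mathlib

open MeasureTheory Real
open scoped RealInnerProductSpace

/-!
Fix `v` orthogonal to every true center `θ s` and let `m x = ∑ ℓ, ψ_ℓ(x) ⟪β ℓ, v⟫` be the
`ψ`-weighted mean of the projections of the fitted centers on `v`. Since `v ⟂ θ`, the derivative
of the true density `f*` along `v` is `-f* ⟪x, v⟫ / σ²`, and the derivative of `m` along `v` is
`(∑ ℓ, ψ_ℓ ⟪β ℓ, v⟫² - m²) / σ²`, the `ψ`-variance of `⟪β ·, v⟫`. The integral of the derivative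
of `f* m` along `v` vanishes; paired with `v`, the stationarity equations cancel every other term
of it and leave `∫ f* m² = 0`, so `m ≡ 0`. Then its derivative vanishes too, and since every
`ψ_ℓ` is positive this forces `⟪β ℓ, v⟫ = 0`. Hence every `β i` lies in `(span θ)ᗮᗮ = span θ`.
-/
noncomputable def gaussDensity {d : ℕ} (σ : ℝ) (μ x : EuclideanSpace ℝ (Fin d)) : ℝ :=
  ((Real.sqrt (2 * π) * σ)⁻¹) ^ d * Real.exp (-‖x - μ‖ ^ 2 / (2 * σ ^ 2))

noncomputable def mixDensity {d n : ℕ} (σ : ℝ) (θ : Fin n → EuclideanSpace ℝ (Fin d))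
    (x : EuclideanSpace ℝ (Fin d)) : ℝ :=
  (n : ℝ)⁻¹ * ∑ s, gaussDensity σ (θ s) x

noncomputable def assocCoef {d k : ℕ} (σ : ℝ) (β : Fin k → EuclideanSpace ℝ (Fin d))
    (j : Fin k) (x : EuclideanSpace ℝ (Fin d)) : ℝ :=
  Real.exp (-‖x - β j‖ ^ 2 / (2 * σ ^ 2)) / ∑ ℓ, Real.exp (-‖x - β ℓ‖ ^ 2 / (2 * σ ^ 2))

theorem integral_eq_zero_of_hasLineDerivAt {E F : Type*} [NormedAddCommGroup E]
    [NormedSpace ℝ E] [FiniteDimensional ℝ E] [MeasurableSpace E] [BorelSpace E]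
    {μ : Measure E} [μ.IsAddHaarMeasure] [NormedAddCommGroup F] [NormedSpace ℝ F]
    {f f' : E → F} {v : E} (hf : Integrable f μ) (hf' : Integrable f' μ)
    (hderiv : ∀ x, HasLineDerivAt ℝ f (f' x) x v) :
    ∫ x, f' x ∂μ = 0 := by
  simpa using integral_bilinear_hasLineDerivAt_right_eq_neg_left_of_integrable
    (B := ContinuousLinearMap.lsmul ℝ ℝ) (f := fun _ => (1 : ℝ)) (f' := fun _ => 0)
    (by simp) (by simpa using hf') (by simpa using hf)
    (fun _ _ => hasDerivAt_const (0 : ℝ) (1 : ℝ)) (fun x _ => hderiv x)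

lemma mul_exp_neg_mul_sq_le {b : ℝ} (hb : 0 < b) (t : ℝ) :
    t * rexp (-b * t ^ 2) ≤ (1 + 2 / b) * rexp (-(b / 2) * t ^ 2) := by
  have hsplit : rexp (-b * t ^ 2) = rexp (-(b / 2) * t ^ 2) * rexp (-(b / 2) * t ^ 2) := by
    rw [← Real.exp_add]; ring_nf
  have hinv : rexp ((b / 2) * t ^ 2) * rexp (-(b / 2) * t ^ 2) = 1 := by
    rw [← Real.exp_add]; simp
  have hsq : (b / 2) * t ^ 2 ≤ rexp ((b / 2) * t ^ 2) := by
    linarith [Real.add_one_le_exp ((b / 2) * t ^ 2)]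
  have hu := Real.exp_pos (-(b / 2) * t ^ 2)
  have hu1 : rexp (-(b / 2) * t ^ 2) ≤ 1 := Real.exp_le_one_iff.2 (by nlinarith)
  have ht2 : t ^ 2 * rexp (-(b / 2) * t ^ 2) ≤ 2 / b := by
    rw [le_div_iff₀ hb]; nlinarith
  rw [hsplit]
  nlinarith [sq_nonneg (t - 1)]

section GaussKernel

variable {E : Type*} [NormedAddCommGroup E] {σ : ℝ}

noncomputable def gaussKernel (σ : ℝ) (μ x : E) : ℝ := rexp (-‖x - μ‖ ^ 2 / (2 * σ ^ 2))

lemma gaussKernel_pos (μ x : E) : 0 < gaussKernel σ μ x := Real.exp_pos _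

@[fun_prop]
lemma continuous_gaussKernel (μ : E) : Continuous (gaussKernel σ μ) := by
  unfold gaussKernel; fun_prop

lemma gaussKernel_eq_exp_neg_mul (σ : ℝ) (μ x : E) :
    gaussKernel σ μ x = rexp (-(1 / (2 * σ ^ 2)) * ‖x - μ‖ ^ 2) := by
  unfold gaussKernel; congr 1; ring

variable [InnerProductSpace ℝ E]

lemma hasLineDerivAt_gaussKernel (hσ : σ ≠ 0) (μ x v : E) :
    HasLineDerivAt ℝ (gaussKernel σ μ) (gaussKernel σ μ x * (⟪μ - x, v⟫ / σ ^ 2)) x v := by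
  have hline : HasDerivAt (fun t : ℝ => x + t • v - μ) v 0 := by
    simpa using (((hasDerivAt_id (0 : ℝ)).smul_const v).const_add x).sub_const μ
  have hexp : HasDerivAt (fun t : ℝ => rexp (-‖x + t • v - μ‖ ^ 2 / (2 * σ ^ 2)))
      (rexp (-‖x - μ‖ ^ 2 / (2 * σ ^ 2)) * (-(2 * ⟪x - μ, v⟫) / (2 * σ ^ 2))) 0 := by
    simpa using (hline.norm_sq.fun_neg.div_const (2 * σ ^ 2)).exp
  -- `HasLineDerivAt` is by definition `HasDerivAt` along `t ↦ x + t • v`.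
  refine hexp.congr_deriv ?_
  rw [gaussKernel, show μ - x = -(x - μ) by abel, inner_neg_left]
  field_simp

variable [FiniteDimensional ℝ E] [MeasurableSpace E] [BorelSpace E]

lemma integrable_exp_neg_mul_sq_norm {b : ℝ} (hb : 0 < b) :
    Integrable (fun x : E => rexp (-b * ‖x‖ ^ 2)) :=
  Integrable.of_integral_ne_zero <| by
    rw [GaussianFourier.integral_rexp_neg_mul_sq_norm hb]; positivity

lemma integrable_gaussKernel (hσ : σ ≠ 0) (μ : E) : Integrable (gaussKernel σ μ) := by
  simp only [funext (gaussKernel_eq_exp_neg_mul σ μ)]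
  exact (integrable_exp_neg_mul_sq_norm (by positivity)).comp_sub_right μ

lemma integrable_norm_mul_gaussKernel (hσ : σ ≠ 0) (μ : E) :
    Integrable (fun x => ‖x‖ * gaussKernel σ μ x) := by
  set b := 1 / (2 * σ ^ 2)
  have hb : 0 < b := by positivity
  have hbound : Integrable fun x =>
      (1 + 2 / b) * rexp (-(b / 2) * ‖x - μ‖ ^ 2) + ‖μ‖ * gaussKernel σ μ x :=
    (((integrable_exp_neg_mul_sq_norm (E := E) (half_pos hb)).comp_sub_right μ).const_mul _).add
      ((integrable_gaussKernel hσ μ).const_mul _)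
  refine hbound.mono' (by fun_prop) (ae_of_all _ fun x => ?_)
  have hg := gaussKernel_pos (σ := σ) μ x
  rw [Real.norm_of_nonneg (by positivity)]
  have hx : ‖x‖ ≤ ‖x - μ‖ + ‖μ‖ := norm_le_norm_sub_add x μ
  have := mul_exp_neg_mul_sq_le hb ‖x - μ‖
  rw [← gaussKernel_eq_exp_neg_mul] at this
  nlinarith

end GaussKernel

section Mixture

variable {d n : ℕ} {σ : ℝ}

lemma mixDensity_eq (σ : ℝ) (θ : Fin n → EuclideanSpace ℝ (Fin d)) (x : EuclideanSpace ℝ (Fin d)) :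
    mixDensity σ θ x = (n : ℝ)⁻¹ * ((√(2 * π) * σ)⁻¹) ^ d * ∑ s, gaussKernel σ (θ s) x := by
  simp only [mixDensity, gaussDensity, gaussKernel, ← Finset.mul_sum, mul_assoc]

lemma mixDensity_pos (hσ : 0 < σ) (hn : 0 < n) (θ : Fin n → EuclideanSpace ℝ (Fin d))
    (x : EuclideanSpace ℝ (Fin d)) : 0 < mixDensity σ θ x := by
  rw [mixDensity_eq]
  exact mul_pos (by positivity)
    (Finset.sum_pos (fun s _ => gaussKernel_pos _ _) ⟨⟨0, hn⟩, Finset.mem_univ _⟩)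

@[fun_prop]
lemma continuous_mixDensity (θ : Fin n → EuclideanSpace ℝ (Fin d)) :
    Continuous (mixDensity σ θ) := by
  simp only [funext (mixDensity_eq σ θ)]; fun_prop

lemma integrable_mixDensity (hσ : σ ≠ 0) (θ : Fin n → EuclideanSpace ℝ (Fin d)) :
    Integrable (mixDensity σ θ) := by
  simp only [funext (mixDensity_eq σ θ)]
  exact (integrable_finsetSum _ fun s _ => integrable_gaussKernel hσ (θ s)).const_mul _

lemma integrable_norm_mul_mixDensity (hσ : σ ≠ 0) (θ : Fin n → EuclideanSpace ℝ (Fin d)) :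
    Integrable (fun x => ‖x‖ * mixDensity σ θ x) := by
  simp only [mixDensity_eq, Finset.mul_sum, mul_left_comm ‖_‖]
  exact integrable_finsetSum _ fun s _ => (integrable_norm_mul_gaussKernel hσ (θ s)).const_mul _

lemma hasLineDerivAt_mixDensity (hσ : σ ≠ 0) {θ : Fin n → EuclideanSpace ℝ (Fin d)}
    {v : EuclideanSpace ℝ (Fin d)} (hθv : ∀ s, ⟪θ s, v⟫ = 0) (x : EuclideanSpace ℝ (Fin d)) :
    HasLineDerivAt ℝ (mixDensity σ θ) (mixDensity σ θ x * (-⟪x, v⟫ / σ ^ 2)) x v := by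
  have hsum : HasLineDerivAt ℝ (fun y => ∑ s, gaussKernel σ (θ s) y)
      (∑ s, gaussKernel σ (θ s) x * (⟪θ s - x, v⟫ / σ ^ 2)) x v :=
    HasDerivAt.fun_sum fun s _ => hasLineDerivAt_gaussKernel hσ (θ s) x v
  simp only [inner_sub_left, hθv, zero_sub, ← Finset.sum_mul] at hsum
  simp only [funext (mixDensity_eq σ θ), mul_assoc]
  exact (hsum.const_mul _).const_mul _

end Mixture

section Assoc

variable {d k : ℕ} {σ : ℝ}

lemma assocCoef_eq (σ : ℝ) (β : Fin k → EuclideanSpace ℝ (Fin d)) (j : Fin k)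
    (x : EuclideanSpace ℝ (Fin d)) :
    assocCoef σ β j x = gaussKernel σ (β j) x / ∑ ℓ, gaussKernel σ (β ℓ) x := rfl

lemma sum_gaussKernel_pos (β : Fin k → EuclideanSpace ℝ (Fin d)) (j : Fin k)
    (x : EuclideanSpace ℝ (Fin d)) : 0 < ∑ ℓ, gaussKernel σ (β ℓ) x :=
  Finset.sum_pos (fun _ _ => gaussKernel_pos _ _) ⟨j, Finset.mem_univ j⟩

lemma assocCoef_pos (β : Fin k → EuclideanSpace ℝ (Fin d)) (j : Fin k)
    (x : EuclideanSpace ℝ (Fin d)) : 0 < assocCoef σ β j x :=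
  div_pos (gaussKernel_pos _ _) (sum_gaussKernel_pos β j x)

lemma assocCoef_le_one (β : Fin k → EuclideanSpace ℝ (Fin d)) (j : Fin k)
    (x : EuclideanSpace ℝ (Fin d)) : assocCoef σ β j x ≤ 1 :=
  div_le_one_of_le₀
    (Finset.single_le_sum (fun ℓ _ => (gaussKernel_pos (β ℓ) x).le) (Finset.mem_univ j))
    (sum_gaussKernel_pos β j x).le

@[fun_prop]
lemma continuous_assocCoef (β : Fin k → EuclideanSpace ℝ (Fin d)) (j : Fin k) :
    Continuous (assocCoef σ β j) :=
  Continuous.div (by fun_prop) (by fun_prop) fun x => (sum_gaussKernel_pos β j x).ne'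

noncomputable def assocMean (σ : ℝ) (β : Fin k → EuclideanSpace ℝ (Fin d))
    (v x : EuclideanSpace ℝ (Fin d)) : ℝ :=
  ∑ ℓ, assocCoef σ β ℓ x * ⟪β ℓ, v⟫

lemma assocMean_eq (σ : ℝ) (β : Fin k → EuclideanSpace ℝ (Fin d)) (v x : EuclideanSpace ℝ (Fin d)) :
    assocMean σ β v x = (∑ ℓ, gaussKernel σ (β ℓ) x * ⟪β ℓ, v⟫) / ∑ ℓ, gaussKernel σ (β ℓ) x := by
  simp only [assocMean, assocCoef_eq, Finset.sum_div, div_mul_eq_mul_div]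

@[fun_prop]
lemma continuous_assocMean (β : Fin k → EuclideanSpace ℝ (Fin d)) (v : EuclideanSpace ℝ (Fin d)) :
    Continuous (assocMean σ β v) := by
  unfold assocMean; fun_prop

lemma abs_assocMean_le (β : Fin k → EuclideanSpace ℝ (Fin d)) (v x : EuclideanSpace ℝ (Fin d)) :
    |assocMean σ β v x| ≤ ∑ ℓ, |⟪β ℓ, v⟫| :=
  (Finset.abs_sum_le_sum_abs _ _).trans <| Finset.sum_le_sum fun ℓ _ => by
    rw [abs_mul, abs_of_pos (assocCoef_pos β ℓ x)]
    exact mul_le_of_le_one_left (abs_nonneg _) (assocCoef_le_one β ℓ x)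

lemma hasLineDerivAt_assocCoef (hσ : σ ≠ 0) (β : Fin k → EuclideanSpace ℝ (Fin d)) (j : Fin k)
    (x v : EuclideanSpace ℝ (Fin d)) :
    HasLineDerivAt ℝ (assocCoef σ β j)
      (assocCoef σ β j x * ((⟪β j, v⟫ - assocMean σ β v x) / σ ^ 2)) x v := by
  have hD := sum_gaussKernel_pos (σ := σ) β j x
  have hsum : HasLineDerivAt ℝ (fun y => ∑ ℓ, gaussKernel σ (β ℓ) y)
      ((∑ ℓ, gaussKernel σ (β ℓ) x * ⟪β ℓ, v⟫ - ⟪x, v⟫ * ∑ ℓ, gaussKernel σ (β ℓ) x) / σ ^ 2)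
      x v := by
    refine (HasDerivAt.fun_sum fun ℓ _ => hasLineDerivAt_gaussKernel hσ (β ℓ) x v).congr_deriv ?_
    simp only [inner_sub_left, Finset.mul_sum, ← Finset.sum_sub_distrib, Finset.sum_div]
    exact Finset.sum_congr rfl fun ℓ _ => by ring
  have hquot := (hasLineDerivAt_gaussKernel hσ (β j) x v).div hsum (by simpa using hD.ne')
  simp only [zero_smul, add_zero] at hquot
  refine hquot.congr_deriv ?_
  rw [assocMean_eq, assocCoef_eq, inner_sub_left]
  field_simp
  ring

lemma hasLineDerivAt_assocMean (hσ : σ ≠ 0) (β : Fin k → EuclideanSpace ℝ (Fin d))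
    (x v : EuclideanSpace ℝ (Fin d)) :
    HasLineDerivAt ℝ (assocMean σ β v)
      ((∑ ℓ, assocCoef σ β ℓ x * ⟪β ℓ, v⟫ ^ 2 - assocMean σ β v x ^ 2) / σ ^ 2) x v := by
  refine (HasDerivAt.fun_sum fun ℓ _ =>
    (hasLineDerivAt_assocCoef hσ β ℓ x v).mul_const ⟪β ℓ, v⟫).congr_deriv ?_
  simp only [assocMean, sq, Finset.sum_mul, ← Finset.sum_sub_distrib, Finset.sum_div]
  exact Finset.sum_congr rfl fun ℓ _ => by ring

end Assoc

lemma inner_smul_sub_eq {E : Type*} [NormedAddCommGroup E] [InnerProductSpace ℝ E]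
    (c : ℝ) (b x v : E) :
    ⟪v, c • (b - x)⟫ = c * (⟪b, v⟫ - ⟪x, v⟫) := by
  rw [real_inner_smul_right, inner_sub_right, real_inner_comm v b, real_inner_comm v x]

section Stationary

variable {d k n : ℕ} {σ : ℝ}

lemma integrable_mixDensity_mul_assocCoef_smul_sub (hσ : σ ≠ 0)
    (θ : Fin n → EuclideanSpace ℝ (Fin d)) (β : Fin k → EuclideanSpace ℝ (Fin d)) (j : Fin k) :
    Integrable fun x => (mixDensity σ θ x * assocCoef σ β j x) • (β j - x) := by
  refine (((integrable_mixDensity hσ θ).norm.mul_const ‖β j‖).add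
    (integrable_norm_mul_mixDensity hσ θ).norm).mono' (by fun_prop) (ae_of_all _ fun x => ?_)
  simp only [Pi.add_apply, norm_smul, norm_mul, norm_norm,
    Real.norm_of_nonneg (assocCoef_pos β j x).le]
  calc ‖mixDensity σ θ x‖ * assocCoef σ β j x * ‖β j - x‖
      ≤ ‖mixDensity σ θ x‖ * 1 * (‖β j‖ + ‖x‖) := by
        gcongr
        exacts [assocCoef_le_one β j x, norm_sub_le _ _]
    _ = ‖mixDensity σ θ x‖ * ‖β j‖ + ‖x‖ * ‖mixDensity σ θ x‖ := by ring

lemma integrable_mixDensity_mul_assocCoef_mul_inner_sub (hσ : σ ≠ 0)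
    (θ : Fin n → EuclideanSpace ℝ (Fin d)) (β : Fin k → EuclideanSpace ℝ (Fin d)) (j : Fin k)
    (v : EuclideanSpace ℝ (Fin d)) :
    Integrable fun x => mixDensity σ θ x * assocCoef σ β j x * (⟪β j, v⟫ - ⟪x, v⟫) := by
  simpa only [inner_smul_sub_eq] using
    (integrable_mixDensity_mul_assocCoef_smul_sub hσ θ β j).const_inner (𝕜 := ℝ) v

lemma integral_mixDensity_mul_assocCoef_mul_inner_sub (hσ : σ ≠ 0)
    (θ : Fin n → EuclideanSpace ℝ (Fin d)) (β : Fin k → EuclideanSpace ℝ (Fin d)) (j : Fin k)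
    (v : EuclideanSpace ℝ (Fin d)) :
    ∫ x, mixDensity σ θ x * assocCoef σ β j x * (⟪β j, v⟫ - ⟪x, v⟫) =
      ⟪v, ∫ x, (mixDensity σ θ x * assocCoef σ β j x) • (β j - x)⟫ := by
  simpa only [inner_smul_sub_eq] using
    integral_inner (𝕜 := ℝ) (integrable_mixDensity_mul_assocCoef_smul_sub hσ θ β j) v

lemma integrable_mixDensity_mul_assocMean_pow (hσ : σ ≠ 0)
    (θ : Fin n → EuclideanSpace ℝ (Fin d)) (β : Fin k → EuclideanSpace ℝ (Fin d))
    (v : EuclideanSpace ℝ (Fin d)) (r : ℕ) :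
    Integrable fun x => mixDensity σ θ x * assocMean σ β v x ^ r :=
  (integrable_mixDensity hσ θ).mul_bdd (by fun_prop) <| ae_of_all _ fun x => by
    rw [norm_pow, Real.norm_eq_abs]
    exact pow_le_pow_left₀ (abs_nonneg _) (abs_assocMean_le β v x) r

lemma hasLineDerivAt_mixDensity_mul_assocMean (hσ : σ ≠ 0)
    {θ : Fin n → EuclideanSpace ℝ (Fin d)} (β : Fin k → EuclideanSpace ℝ (Fin d))
    {v : EuclideanSpace ℝ (Fin d)} (hθv : ∀ s, ⟪θ s, v⟫ = 0) (x : EuclideanSpace ℝ (Fin d)) :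
    HasLineDerivAt ℝ (fun y => mixDensity σ θ y * assocMean σ β v y)
      ((∑ ℓ, ⟪β ℓ, v⟫ * (mixDensity σ θ x * assocCoef σ β ℓ x * (⟪β ℓ, v⟫ - ⟪x, v⟫)) -
        mixDensity σ θ x * assocMean σ β v x ^ 2) / σ ^ 2) x v := by
  refine ((hasLineDerivAt_mixDensity hσ hθv x).mul
    (hasLineDerivAt_assocMean hσ β x v)).congr_deriv ?_
  have hsum : ∑ ℓ, ⟪β ℓ, v⟫ * (mixDensity σ θ x * assocCoef σ β ℓ x * (⟪β ℓ, v⟫ - ⟪x, v⟫)) =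
      mixDensity σ θ x * (∑ ℓ, assocCoef σ β ℓ x * ⟪β ℓ, v⟫ ^ 2 - ⟪x, v⟫ * assocMean σ β v x) := by
    simp only [assocMean, Finset.mul_sum, ← Finset.sum_sub_distrib]
    exact Finset.sum_congr rfl fun ℓ _ => by ring
  simp only [zero_smul, add_zero]
  rw [hsum]
  ring

lemma integral_mixDensity_mul_assocMean_sq_eq_zero (hσ : σ ≠ 0)
    {θ : Fin n → EuclideanSpace ℝ (Fin d)} {β : Fin k → EuclideanSpace ℝ (Fin d)}
    {v : EuclideanSpace ℝ (Fin d)} (hθv : ∀ s, ⟪θ s, v⟫ = 0)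
    (hstat : ∀ j, ∫ x, (mixDensity σ θ x * assocCoef σ β j x) • (β j - x) = 0) :
    ∫ x, mixDensity σ θ x * assocMean σ β v x ^ 2 = 0 := by
  have hterm : ∀ j, ∫ x, mixDensity σ θ x * assocCoef σ β j x * (⟪β j, v⟫ - ⟪x, v⟫) = 0 :=
    fun j => by
      rw [integral_mixDensity_mul_assocCoef_mul_inner_sub hσ, hstat j, inner_zero_right]
  have hsum : Integrable fun x =>
      ∑ ℓ, ⟪β ℓ, v⟫ * (mixDensity σ θ x * assocCoef σ β ℓ x * (⟪β ℓ, v⟫ - ⟪x, v⟫)) :=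
    integrable_finsetSum _ fun ℓ _ =>
      (integrable_mixDensity_mul_assocCoef_mul_inner_sub hσ θ β ℓ v).const_mul _
  have hsq := integrable_mixDensity_mul_assocMean_pow hσ θ β v 2
  have hstein : ∫ x, (∑ ℓ, ⟪β ℓ, v⟫ * (mixDensity σ θ x * assocCoef σ β ℓ x * (⟪β ℓ, v⟫ - ⟪x, v⟫)) -
      mixDensity σ θ x * assocMean σ β v x ^ 2) / σ ^ 2 = 0 := integral_eq_zero_of_hasLineDerivAt
    (by simpa using integrable_mixDensity_mul_assocMean_pow hσ θ β v 1)
    ((hsum.sub hsq).div_const (σ ^ 2)) (hasLineDerivAt_mixDensity_mul_assocMean hσ β hθv)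
  rw [integral_div, integral_sub hsum hsq, integral_finsetSum _ fun ℓ _ =>
    (integrable_mixDensity_mul_assocCoef_mul_inner_sub hσ θ β ℓ v).const_mul _] at hstein
  simpa [integral_const_mul, hterm, hσ] using hstein

end Stationary

section Span

variable {d k n : ℕ} {σ : ℝ}

lemma assocMean_eq_zero_of_integral_eq_zero (hσ : 0 < σ) (hn : 0 < n)
    {θ : Fin n → EuclideanSpace ℝ (Fin d)} {β : Fin k → EuclideanSpace ℝ (Fin d)}
    {v : EuclideanSpace ℝ (Fin d)} (h : ∫ x, mixDensity σ θ x * assocMean σ β v x ^ 2 = 0) :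
    assocMean σ β v = 0 := by
  have hp := mixDensity_pos hσ hn θ
  have hae := (integral_eq_zero_iff_of_nonneg (fun x => by positivity [hp x])
    (integrable_mixDensity_mul_assocMean_pow hσ.ne' θ β v 2)).1 h
  have hzero := (Continuous.ae_eq_iff_eq volume (by fun_prop) continuous_zero).1 hae
  ext x
  have hx : mixDensity σ θ x * assocMean σ β v x ^ 2 = 0 := congrFun hzero x
  simpa [(hp x).ne'] using hx

lemma inner_eq_zero_of_assocMean_eq_zero (hσ : σ ≠ 0) {β : Fin k → EuclideanSpace ℝ (Fin d)}
    {v : EuclideanSpace ℝ (Fin d)} (hm : assocMean σ β v = 0) (i : Fin k) : ⟪β i, v⟫ = 0 := by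
  have hderiv := hasLineDerivAt_assocMean hσ β 0 v
  rw [hm] at hderiv
  have hvar : ∑ ℓ, assocCoef σ β ℓ 0 * ⟪β ℓ, v⟫ ^ 2 = 0 := by
    simpa [hσ] using hderiv.unique (hasDerivAt_const (0 : ℝ) (0 : ℝ))
  have hi := (Finset.sum_eq_zero_iff_of_nonneg fun ℓ _ =>
    mul_nonneg (assocCoef_pos β ℓ 0).le (sq_nonneg _)).1 hvar i (Finset.mem_univ i)
  simpa [(assocCoef_pos β i 0).ne'] using hi

end Span

theorem stationary_in_span_general {d k ks : ℕ} (hks : 0 < ks) (σ : ℝ) (hσ : 0 < σ)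
    (θ : Fin ks → EuclideanSpace ℝ (Fin d)) (β : Fin k → EuclideanSpace ℝ (Fin d))
    (hstat : ∀ j : Fin k,
      ∫ x, (mixDensity σ θ x * assocCoef σ β j x) • (β j - x) = 0) :
    ∀ i : Fin k, β i ∈ Submodule.span ℝ (Set.range θ) := by
  intro i
  rw [← Submodule.orthogonal_orthogonal (Submodule.span ℝ (Set.range θ)),
    Submodule.mem_orthogonal']
  intro v hv
  have hθv : ∀ s, ⟪θ s, v⟫ = 0 := fun s =>
    Submodule.inner_right_of_mem_orthogonal (Submodule.subset_span (Set.mem_range_self s)) hv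
  have hm := assocMean_eq_zero_of_integral_eq_zero hσ hks
    (integral_mixDensity_mul_assocMean_sq_eq_zero hσ.ne' hθv hstat)
  exact inner_eq_zero_of_assocMean_eq_zero hσ.ne' hm i

/-- **Linear span** (Corollary): every stationary point of `L` lies in the span of the
true component centers. -/
theorem stationary_in_span {d k ks : ℕ} (hk : 0 < k) (hks : 0 < ks) (σ : ℝ) (hσ : 0 < σ)
    (θ : Fin ks → EuclideanSpace ℝ (Fin d)) (β : Fin k → EuclideanSpace ℝ (Fin d))
    (hstat : ∀ j : Fin k,
      ∫ x, (mixDensity σ θ x * assocCoef σ β j x) • (β j - x) = 0) :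
    ∀ i : Fin k, β i ∈ Submodule.span ℝ (Set.range θ) :=
  stationary_in_span_general hks σ hσ θ β hstat
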